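/- Let Y_i, L_i, R_i, Y_j, L_j, R_j be reals with L_i < Y_i < R_i and L_j < Y_j < R_j, X_i, X_j ∈ ℝ^p, and set lo = max(L_j − Y_j, Y_i − R_i), hi = min(R_j − Y_j, Y_i − L_i). For any β ∈ ℝ^p such that d := e_i(β) − e_j(β) ∉ {lo, 0, hi}, the function h_{ij} is differentiable at β with gradient ∇h_{ij}(β) = −sgn(d)·(X_i − X_j) = −ξ_{ij}(β) if lo < d < hi, and ∇h_{ij}(β) = 0 if d < lo or d > hi. Consequently, at any β at which, for every pair (i,j) with i ≠ j, e_i(β) − e_j(β) avoids the three exceptional values, the loss l_n is differentiable with ∇l_n(β) = −Σ_{i≠j} ξ_{ij}(β); hence the Mann–Whitney estimating equation Σ_{i≠j} ξ_{ij}(β) = 0 is the first-order stationarity condition for minimizing the loss l_n. -/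

import Mathlib

open scoped RealInnerProductSpace BigOperators Classical

noncomputable section

variable {p : ℕ}

/-- Residual `e_k(β) = Y_k − βᵀX_k`. -/
def resid (Y : ℝ) (X : EuclideanSpace ℝ (Fin p)) (β : EuclideanSpace ℝ (Fin p)) : ℝ :=
  Y - ⟪β, X⟫

/-- The Mann–Whitney loss summand `h_{ij}` as a function of `β`. -/
def hfun (Yi Li Ri Yj Lj Rj : ℝ) (Xi Xj : EuclideanSpace ℝ (Fin p))
    (β : EuclideanSpace ℝ (Fin p)) : ℝ :=
  |max (max (min (min (resid Yi Xi β - resid Yj Xj β) (Rj - Yj)) (Yi - Li)) (Lj - Yj))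
    (Yi - Ri)|

/-- The estimating-function summand
`ξ_{ij}(β) = I{L_j(β) < e_i(β) < R_j(β), L_i(β) < e_j(β) < R_i(β)}·(X_i−X_j)·sgn(e_i(β)−e_j(β))`. -/
def xifun (Yi Li Ri Yj Lj Rj : ℝ) (Xi Xj : EuclideanSpace ℝ (Fin p))
    (β : EuclideanSpace ℝ (Fin p)) : EuclideanSpace ℝ (Fin p) :=
  if (Lj - ⟪β, Xj⟫ < resid Yi Xi β ∧ resid Yi Xi β < Rj - ⟪β, Xj⟫ ∧
      Li - ⟪β, Xi⟫ < resid Yj Xj β ∧ resid Yj Xj β < Ri - ⟪β, Xi⟫) then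
    Real.sign (resid Yi Xi β - resid Yj Xj β) • (Xi - Xj)
  else 0

/-! Since `min` and `max` are associative, `h_{ij} = |max (min d hi) lo|` with
`d(β) = e_i(β) − e_j(β)` affine in `β`, of gradient `−(X_i − X_j)`. Off `{lo, 0, hi}` the outer
function is locally `|t|` (when `lo < d < hi`) or locally constant, so the chain rule gives the
gradient; and the indicator in `ξ_{ij}` is exactly the event `lo < d < hi`. -/

section Gradient

variable {F : Type*} [NormedAddCommGroup F] [InnerProductSpace ℝ F] [CompleteSpace F]

theorem HasDerivAt.comp_hasGradientAt {g : ℝ → ℝ} {g' : ℝ} {f : F → ℝ} {f' x : F}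
    (hg : HasDerivAt g g' (f x)) (hf : HasGradientAt f f' x) :
    HasGradientAt (g ∘ f) (g' • f') x := by
  rw [hasGradientAt_iff_hasFDerivAt] at hf ⊢
  simpa using hg.comp_hasFDerivAt x hf

theorem HasGradientAt.fun_sum {ι : Type*} {s : Finset ι} {f : ι → F → ℝ} {f' : ι → F} {x : F}
    (h : ∀ i ∈ s, HasGradientAt (f i) (f' i) x) :
    HasGradientAt (fun y => ∑ i ∈ s, f i y) (∑ i ∈ s, f' i) x := by
  rw [hasGradientAt_iff_hasFDerivAt, map_sum]
  exact HasFDerivAt.fun_sum fun i hi => hasGradientAt_iff_hasFDerivAt.mp (h i hi)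

theorem hasGradientAt_const_sub_inner (c : ℝ) (v x : F) :
    HasGradientAt (fun y => c - ⟪y, v⟫) (-v) x := by
  have h : (fun y => c - ⟪y, v⟫) = fun y => c - innerSL ℝ v y := by
    simp only [innerSL_apply_apply, real_inner_comm]
  rw [hasGradientAt_iff_hasFDerivAt, h, map_neg]
  exact ((innerSL ℝ v).hasFDerivAt).const_sub c

end Gradient

theorem Real.sign_eq_coe_sign (r : ℝ) : Real.sign r = (SignType.sign r : ℝ) := by
  rcases lt_trichotomy r 0 with hr | rfl | hr
  · simp [Real.sign_of_neg hr, hr]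
  · simp
  · simp [Real.sign_of_pos hr, hr]

section Clamp

variable {lo hi t : ℝ}

theorem hasDerivAt_abs_max_min_of_mem (hlo : lo < t) (hhi : t < hi) (ht : t ≠ 0) :
    HasDerivAt (fun s => |max (min s hi) lo|) (Real.sign t) t := by
  rw [Real.sign_eq_coe_sign]
  refine (hasDerivAt_abs ht).congr_of_eventuallyEq ?_
  filter_upwards [Ioo_mem_nhds hlo hhi] with s hs
  rw [min_eq_left hs.2.le, max_eq_left hs.1.le]

theorem hasDerivAt_abs_max_min_of_lt_or_gt (h : t < lo ∨ hi < t) :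
    HasDerivAt (fun s => |max (min s hi) lo|) 0 t := by
  rcases h with h | h
  · refine (hasDerivAt_const t |lo|).congr_of_eventuallyEq ?_
    filter_upwards [Iio_mem_nhds h] with s hs
    rw [max_eq_right ((min_le_left s hi).trans hs.le)]
  · refine (hasDerivAt_const t |max hi lo|).congr_of_eventuallyEq ?_
    filter_upwards [Ioi_mem_nhds h] with s hs
    rw [min_eq_right hs.le]

end Clamp

theorem hfun_eq_comp (Yi Li Ri Yj Lj Rj : ℝ) (Xi Xj : EuclideanSpace ℝ (Fin p)) :
    hfun Yi Li Ri Yj Lj Rj Xi Xj =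
      (fun t => |max (min t (min (Rj - Yj) (Yi - Li))) (max (Lj - Yj) (Yi - Ri))|) ∘
        fun β => resid Yi Xi β - resid Yj Xj β := by
  funext β
  simp only [hfun, Function.comp, min_assoc, max_assoc]

theorem hasGradientAt_resid_sub_resid (Yi Yj : ℝ) (Xi Xj β : EuclideanSpace ℝ (Fin p)) :
    HasGradientAt (fun b => resid Yi Xi b - resid Yj Xj b) (-(Xi - Xj)) β := by
  convert hasGradientAt_const_sub_inner (Yi - Yj) (Xi - Xj) β using 2 with b
  simp only [resid, inner_sub_right]
  ring

section Pair

variable {Yi Li Ri Yj Lj Rj : ℝ} {Xi Xj β : EuclideanSpace ℝ (Fin p)}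

theorem hasGradientAt_hfun_of_mem
    (hlo : max (Lj - Yj) (Yi - Ri) < resid Yi Xi β - resid Yj Xj β)
    (hhi : resid Yi Xi β - resid Yj Xj β < min (Rj - Yj) (Yi - Li))
    (hne : resid Yi Xi β - resid Yj Xj β ≠ 0) :
    HasGradientAt (hfun Yi Li Ri Yj Lj Rj Xi Xj)
      ((-Real.sign (resid Yi Xi β - resid Yj Xj β)) • (Xi - Xj)) β := by
  rw [hfun_eq_comp, neg_smul, ← smul_neg]
  refine HasDerivAt.comp_hasGradientAt ?_ (hasGradientAt_resid_sub_resid Yi Yj Xi Xj β)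
  exact hasDerivAt_abs_max_min_of_mem hlo hhi hne

theorem hasGradientAt_hfun_of_lt_or_gt
    (h : resid Yi Xi β - resid Yj Xj β < max (Lj - Yj) (Yi - Ri) ∨
      min (Rj - Yj) (Yi - Li) < resid Yi Xi β - resid Yj Xj β) :
    HasGradientAt (hfun Yi Li Ri Yj Lj Rj Xi Xj) 0 β := by
  rw [hfun_eq_comp, ← zero_smul ℝ (-(Xi - Xj))]
  refine HasDerivAt.comp_hasGradientAt ?_ (hasGradientAt_resid_sub_resid Yi Yj Xi Xj β)
  exact hasDerivAt_abs_max_min_of_lt_or_gt h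

theorem xifun_eq_ite :
    xifun Yi Li Ri Yj Lj Rj Xi Xj β =
      if max (Lj - Yj) (Yi - Ri) < resid Yi Xi β - resid Yj Xj β ∧
          resid Yi Xi β - resid Yj Xj β < min (Rj - Yj) (Yi - Li) then
        Real.sign (resid Yi Xi β - resid Yj Xj β) • (Xi - Xj)
      else 0 := by
  refine if_congr ?_ rfl rfl
  simp only [resid, max_lt_iff, lt_min_iff]
  constructor
  · rintro ⟨h₁, h₂, h₃, h₄⟩
    exact ⟨⟨by linarith, by linarith⟩, by linarith, by linarith⟩
  · rintro ⟨⟨h₁, h₂⟩, h₃, h₄⟩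
    exact ⟨by linarith, by linarith, by linarith, by linarith⟩

theorem hasGradientAt_hfun
    (hlo : resid Yi Xi β - resid Yj Xj β ≠ max (Lj - Yj) (Yi - Ri))
    (hne : resid Yi Xi β - resid Yj Xj β ≠ 0)
    (hhi : resid Yi Xi β - resid Yj Xj β ≠ min (Rj - Yj) (Yi - Li)) :
    HasGradientAt (hfun Yi Li Ri Yj Lj Rj Xi Xj) (-xifun Yi Li Ri Yj Lj Rj Xi Xj β) β := by
  rw [xifun_eq_ite]
  split_ifs with hmem
  · rw [← neg_smul]
    exact hasGradientAt_hfun_of_mem hmem.1 hmem.2 hne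
  · rw [neg_zero]
    refine hasGradientAt_hfun_of_lt_or_gt ?_
    rw [not_and_or, not_lt, not_lt] at hmem
    exact hmem.imp (lt_of_le_of_ne · hlo) (lt_of_le_of_ne · hhi.symm)

end Pair

theorem hfun_gradient_and_loss_gradient_general
    {n : ℕ} (Y L R : Fin n → ℝ) (X : Fin n → EuclideanSpace ℝ (Fin p)) :
    (∀ (i j : Fin n) (β : EuclideanSpace ℝ (Fin p)),
      resid (Y i) (X i) β - resid (Y j) (X j) β ≠ max (L j - Y j) (Y i - R i) →
      resid (Y i) (X i) β - resid (Y j) (X j) β ≠ 0 →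
      resid (Y i) (X i) β - resid (Y j) (X j) β ≠ min (R j - Y j) (Y i - L i) →
      ((max (L j - Y j) (Y i - R i) < resid (Y i) (X i) β - resid (Y j) (X j) β ∧
          resid (Y i) (X i) β - resid (Y j) (X j) β < min (R j - Y j) (Y i - L i) →
        HasGradientAt (hfun (Y i) (L i) (R i) (Y j) (L j) (R j) (X i) (X j))
          ((-Real.sign (resid (Y i) (X i) β - resid (Y j) (X j) β)) • (X i - X j)) β ∧
        (-Real.sign (resid (Y i) (X i) β - resid (Y j) (X j) β)) • (X i - X j) =
          -(xifun (Y i) (L i) (R i) (Y j) (L j) (R j) (X i) (X j) β)) ∧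
      (resid (Y i) (X i) β - resid (Y j) (X j) β < max (L j - Y j) (Y i - R i) ∨
          min (R j - Y j) (Y i - L i) < resid (Y i) (X i) β - resid (Y j) (X j) β →
        HasGradientAt (hfun (Y i) (L i) (R i) (Y j) (L j) (R j) (X i) (X j))
          (0 : EuclideanSpace ℝ (Fin p)) β))) ∧
    (∀ β : EuclideanSpace ℝ (Fin p),
      (∀ i j : Fin n, i ≠ j →
        resid (Y i) (X i) β - resid (Y j) (X j) β ≠ max (L j - Y j) (Y i - R i) ∧
        resid (Y i) (X i) β - resid (Y j) (X j) β ≠ 0 ∧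
        resid (Y i) (X i) β - resid (Y j) (X j) β ≠ min (R j - Y j) (Y i - L i)) →
      HasGradientAt
        (fun b => ∑ i : Fin n, ∑ j : Fin n, if i = j then 0 else
          hfun (Y i) (L i) (R i) (Y j) (L j) (R j) (X i) (X j) b)
        (-(∑ i : Fin n, ∑ j : Fin n, if i = j then 0 else
          xifun (Y i) (L i) (R i) (Y j) (L j) (R j) (X i) (X j) β)) β) := by
  refine ⟨fun i j β _ hne _ => ⟨fun hmem => ⟨hasGradientAt_hfun_of_mem hmem.1 hmem.2 hne, ?_⟩,
    hasGradientAt_hfun_of_lt_or_gt⟩, fun β hβ => ?_⟩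
  · rw [xifun_eq_ite, if_pos hmem, neg_smul]
  simp only [← Finset.sum_neg_distrib]
  refine HasGradientAt.fun_sum fun i _ => HasGradientAt.fun_sum fun j _ => ?_
  by_cases hij : i = j
  · simpa only [hij, if_true, neg_zero] using hasGradientAt_const β (0 : ℝ)
  · obtain ⟨hlo, hne, hhi⟩ := hβ i j hij
    simpa only [hij, if_false] using hasGradientAt_hfun hlo hne hhi

/-- **Differentiability of the Mann–Whitney loss off the kink set**: if
`d = e_i(β) − e_j(β) ∉ {lo, 0, hi}` with `lo = max(L_j−Y_j, Y_i−R_i)` and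
`hi = min(R_j−Y_j, Y_i−L_i)`, then `h_{ij}` is differentiable at `β` with gradient
`−sgn(d)·(X_i−X_j) = −ξ_{ij}(β)` when `lo < d < hi`, and gradient `0` when `d < lo` or
`d > hi`. Consequently, at any `β` at which every pair `i ≠ j` avoids the three exceptional
values, the loss `l_n(β) = Σ_{i≠j} h_{ij}(β)` is differentiable with gradient
`−Σ_{i≠j} ξ_{ij}(β)`; hence the Mann–Whitney estimating equation `Σ_{i≠j} ξ_{ij}(β) = 0`
is the first-order stationarity condition for minimizing the loss. -/
theorem hfun_gradient_and_loss_gradient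
    {n : ℕ} (Y L R : Fin n → ℝ) (X : Fin n → EuclideanSpace ℝ (Fin p))
    (hLY : ∀ k, L k < Y k) (hYR : ∀ k, Y k < R k) :
    (∀ (i j : Fin n) (β : EuclideanSpace ℝ (Fin p)),
      resid (Y i) (X i) β - resid (Y j) (X j) β ≠ max (L j - Y j) (Y i - R i) →
      resid (Y i) (X i) β - resid (Y j) (X j) β ≠ 0 →
      resid (Y i) (X i) β - resid (Y j) (X j) β ≠ min (R j - Y j) (Y i - L i) →
      ((max (L j - Y j) (Y i - R i) < resid (Y i) (X i) β - resid (Y j) (X j) β ∧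
          resid (Y i) (X i) β - resid (Y j) (X j) β < min (R j - Y j) (Y i - L i) →
        HasGradientAt (hfun (Y i) (L i) (R i) (Y j) (L j) (R j) (X i) (X j))
          ((-Real.sign (resid (Y i) (X i) β - resid (Y j) (X j) β)) • (X i - X j)) β ∧
        (-Real.sign (resid (Y i) (X i) β - resid (Y j) (X j) β)) • (X i - X j) =
          -(xifun (Y i) (L i) (R i) (Y j) (L j) (R j) (X i) (X j) β)) ∧
      (resid (Y i) (X i) β - resid (Y j) (X j) β < max (L j - Y j) (Y i - R i) ∨
          min (R j - Y j) (Y i - L i) < resid (Y i) (X i) β - resid (Y j) (X j) β →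
        HasGradientAt (hfun (Y i) (L i) (R i) (Y j) (L j) (R j) (X i) (X j))
          (0 : EuclideanSpace ℝ (Fin p)) β))) ∧
    (∀ β : EuclideanSpace ℝ (Fin p),
      (∀ i j : Fin n, i ≠ j →
        resid (Y i) (X i) β - resid (Y j) (X j) β ≠ max (L j - Y j) (Y i - R i) ∧
        resid (Y i) (X i) β - resid (Y j) (X j) β ≠ 0 ∧
        resid (Y i) (X i) β - resid (Y j) (X j) β ≠ min (R j - Y j) (Y i - L i)) →
      HasGradientAt
        (fun b => ∑ i : Fin n, ∑ j : Fin n, if i = j then 0 else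
          hfun (Y i) (L i) (R i) (Y j) (L j) (R j) (X i) (X j) b)
        (-(∑ i : Fin n, ∑ j : Fin n, if i = j then 0 else
          xifun (Y i) (L i) (R i) (Y j) (L j) (R j) (X i) (X j) β)) β) :=
  hfun_gradient_and_loss_gradient_general Y L R X

end
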